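/- Let p = p₁ * p₂ be a convolution of two absolutely continuous probability densities each with Fisher information at most I. Then its second derivative p''(x) = ∫ p₁'(y) p₂'(x−y) dy satisfies ∫_{p>0} p''(x)²/p(x) dx ≤ I². -/

import Mathlib

open MeasureTheory
open scoped ENNReal

/-!
With `J = p'² / p`, Cauchy–Schwarz applied to the factorisation
`p₁'(y) p₂'(x - y) = √(J₁(y) J₂(x - y)) · √(p₁(y) p₂(x - y))` gives
`p''(x)² ≤ (J₁ ⋆ J₂)(x) · p(x)`, and integrating `J₁ ⋆ J₂` over `x` gives `(∫ J₁)(∫ J₂) ≤ I²`.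
The factorisation is exact also where `pⱼ` vanishes, because these zeros are minima of `pⱼ`,
so `pⱼ'` vanishes there too. Everything is done in `ℝ≥0∞`, where no integrability has to be tracked.
-/

theorem lintegral_sq_le_of_sq_le_mul {α : Type*} [MeasurableSpace α] {μ : Measure α}
    {u F G : α → ℝ≥0∞} (hF : AEMeasurable F μ) (hG : AEMeasurable G μ)
    (h : ∀ a, u a ^ 2 ≤ F a * G a) :
    (∫⁻ a, u a ∂μ) ^ 2 ≤ (∫⁻ a, F a ∂μ) * ∫⁻ a, G a ∂μ := by
  have hsqrt : ∀ z : ℝ≥0∞, (z ^ (2 : ℝ)⁻¹) ^ (2 : ℝ) = z := ENNReal.rpow_inv_rpow two_ne_zero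
  have hu : ∀ a, u a ≤ F a ^ (2 : ℝ)⁻¹ * G a ^ (2 : ℝ)⁻¹ := fun a => by
    rw [← ENNReal.mul_rpow_of_nonneg _ _ (by norm_num), ENNReal.le_rpow_inv_iff two_pos]
    exact_mod_cast h a
  have holder := ENNReal.lintegral_mul_le_Lp_mul_Lq μ Real.HolderConjugate.two_two
    (hF.pow_const (2 : ℝ)⁻¹) (hG.pow_const (2 : ℝ)⁻¹)
  simp only [Pi.mul_apply, hsqrt, one_div] at holder
  calc (∫⁻ a, u a ∂μ) ^ 2
      ≤ ((∫⁻ a, F a ∂μ) ^ (2 : ℝ)⁻¹ * (∫⁻ a, G a ∂μ) ^ (2 : ℝ)⁻¹) ^ 2 := by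
        gcongr
        exact (lintegral_mono hu).trans holder
    _ = (∫⁻ a, F a ∂μ) * ∫⁻ a, G a ∂μ := by
        rw [mul_pow, ← ENNReal.rpow_natCast, ← ENNReal.rpow_natCast]
        push_cast
        rw [hsqrt, hsqrt]

theorem lintegral_lconvolution {G : Type*} [MeasurableSpace G] [AddGroup G] [MeasurableAdd₂ G]
    [MeasurableNeg G] {μ : Measure G} [SFinite μ] [μ.IsAddLeftInvariant] {f g : G → ℝ≥0∞}
    (hf : Measurable f) (hg : Measurable g) :
    ∫⁻ x, (f ⋆ₗ[μ] g) x ∂μ = (∫⁻ x, f x ∂μ) * ∫⁻ x, g x ∂μ := by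
  change ∫⁻ x, ∫⁻ y, f y * g (-y + x) ∂μ ∂μ = _
  rw [lintegral_lintegral_swap (by fun_prop)]
  have inner (y : G) : ∫⁻ x, f y * g (-y + x) ∂μ = f y * ∫⁻ x, g x ∂μ := by
    rw [lintegral_const_mul _ (by fun_prop), lintegral_add_left_eq_self g]
  simp_rw [inner]
  exact lintegral_mul_const _ hf

theorem HasDerivAt.eq_zero_of_nonneg_of_eq_zero {f : ℝ → ℝ} {f' x : ℝ}
    (hf : HasDerivAt f f' x) (hnonneg : ∀ y, 0 ≤ f y) (hx : f x = 0) : f' = 0 :=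
  IsLocalMin.hasDerivAt_eq_zero (Filter.Eventually.of_forall fun y => hx ▸ hnonneg y) hf

theorem measurable_of_hasDerivAt {f f' : ℝ → ℝ} (h : ∀ x, HasDerivAt f (f' x) x) :
    Measurable f' :=
  funext (fun x => (h x).deriv) ▸ measurable_deriv f

/-- Equal to `0` where `f x = 0` (as `x / 0 = 0`), which is the right value when `f'` vanishes
at the zeros of `f`. -/
noncomputable def fisherDensity {α : Type*} (f f' : α → ℝ) (x : α) : ℝ≥0∞ :=
  ENNReal.ofReal (f' x ^ 2 / f x)

section FisherDensity

variable {α : Type*} {f f' : α → ℝ}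

theorem fisherDensity_mul_ofReal {x : α} (hf : 0 ≤ f x) (hf' : f x = 0 → f' x = 0) :
    fisherDensity f f' x * ENNReal.ofReal (f x) = ‖f' x‖ₑ ^ 2 := by
  rw [Real.enorm_eq_ofReal_abs, ← ENNReal.ofReal_pow (abs_nonneg _), sq_abs]
  rcases hf.eq_or_lt with h | h
  · simp [← h, hf' h.symm]
  · rw [fisherDensity, ← ENNReal.ofReal_mul (by positivity), div_mul_cancel₀ _ h.ne']

@[fun_prop]
theorem measurable_fisherDensity [MeasurableSpace α] (hf : Measurable f) (hf' : Measurable f') :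
    Measurable (fisherDensity f f') := by
  unfold fisherDensity
  fun_prop

theorem lintegral_fisherDensity [MeasurableSpace α] {μ : Measure α} (hf : ∀ x, 0 ≤ f x)
    (hint : IntegrableOn (fun x => f' x ^ 2 / f x) {x | 0 < f x} μ) :
    ∫⁻ x, fisherDensity f f' x ∂μ =
      ENNReal.ofReal (∫ x in {x | 0 < f x}, f' x ^ 2 / f x ∂μ) := by
  have hsupp : Function.support (fisherDensity f f') ⊆ {x | 0 < f x} := fun x hx => by
    by_contra hfx
    exact hx <| ENNReal.ofReal_of_nonpos <|
      div_nonpos_of_nonneg_of_nonpos (sq_nonneg _) (not_lt.1 hfx)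
  rw [← setLIntegral_eq_of_support_subset hsupp,
    ofReal_integral_eq_lintegral_ofReal hint
      (Filter.Eventually.of_forall fun x => div_nonneg (sq_nonneg _) (hf x))]
  rfl

end FisherDensity

theorem ofReal_sq_div_le_lconvolution_fisherDensity {f₁ f₁' f₂ f₂' : ℝ → ℝ}
    (hf₁ : Measurable f₁) (hf₁' : Measurable f₁')
    (hf₂ : Measurable f₂) (hf₂' : Measurable f₂')
    (h₁nonneg : ∀ y, 0 ≤ f₁ y) (h₂nonneg : ∀ y, 0 ≤ f₂ y)
    (h₁zero : ∀ y, f₁ y = 0 → f₁' y = 0) (h₂zero : ∀ y, f₂ y = 0 → f₂' y = 0)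
    (x : ℝ) :
    ENNReal.ofReal ((∫ y, f₁' y * f₂' (x - y)) ^ 2 / ∫ y, f₁ y * f₂ (x - y)) ≤
      (fisherDensity f₁ f₁' ⋆ₗ fisherDensity f₂ f₂') x := by
  set P := ∫ y, f₁ y * f₂ (x - y)
  rcases le_or_gt P 0 with hP | hP
  · rw [ENNReal.ofReal_of_nonpos (div_nonpos_of_nonneg_of_nonpos (sq_nonneg _) hP)]
    exact zero_le
  have hint : Integrable fun y => f₁ y * f₂ (x - y) := by
    by_contra h
    exact hP.ne' (integral_undef h)
  have hPlint :
      ENNReal.ofReal P = ∫⁻ y, ENNReal.ofReal (f₁ y) * ENNReal.ofReal (f₂ (x - y)) := by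
    rw [ofReal_integral_eq_lintegral_ofReal hint
      (Filter.Eventually.of_forall fun y => mul_nonneg (h₁nonneg _) (h₂nonneg _))]
    simp_rw [ENNReal.ofReal_mul (h₁nonneg _)]
  have hsplit : ∀ y, ‖f₁' y * f₂' (x - y)‖ₑ ^ 2 ≤
      (fisherDensity f₁ f₁' y * fisherDensity f₂ f₂' (x - y)) *
        (ENNReal.ofReal (f₁ y) * ENNReal.ofReal (f₂ (x - y))) := fun y => by
    rw [enorm_mul, mul_pow, ← fisherDensity_mul_ofReal (h₁nonneg y) (h₁zero y),
      ← fisherDensity_mul_ofReal (h₂nonneg (x - y)) (h₂zero (x - y)), mul_mul_mul_comm]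
  have hCS := lintegral_sq_le_of_sq_le_mul (μ := volume) (by fun_prop) (by fun_prop) hsplit
  have hnorm : ENNReal.ofReal ((∫ y, f₁' y * f₂' (x - y)) ^ 2) ≤
      (∫⁻ y, ‖f₁' y * f₂' (x - y)‖ₑ) ^ 2 := by
    rw [← sq_abs, ENNReal.ofReal_pow (abs_nonneg _), ← Real.enorm_eq_ofReal_abs]
    gcongr
    exact enorm_integral_le_lintegral_enorm _
  rw [ENNReal.ofReal_div_of_pos hP, lconvolution_def]
  simp_rw [neg_add_eq_sub]
  exact ENNReal.div_le_of_le_mul (hPlint ▸ hnorm.trans hCS)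

theorem second_deriv_bound_conv_two_densities_general
    (p₁ p₁' p₂ p₂' p p'' : ℝ → ℝ) (I : ℝ)
    (h₁nonneg : ∀ x, 0 ≤ p₁ x)
    (h₂nonneg : ∀ x, 0 ≤ p₂ x)
    (h₁deriv : ∀ x, HasDerivAt p₁ (p₁' x) x)
    (h₂deriv : ∀ x, HasDerivAt p₂ (p₂' x) x)
    (h₁fisher : IntegrableOn (fun x => (p₁' x) ^ 2 / p₁ x) {x | 0 < p₁ x})
    (h₂fisher : IntegrableOn (fun x => (p₂' x) ^ 2 / p₂ x) {x | 0 < p₂ x})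
    (h₁I : ∫ x in {x | 0 < p₁ x}, (p₁' x) ^ 2 / p₁ x ≤ I)
    (h₂I : ∫ x in {x | 0 < p₂ x}, (p₂' x) ^ 2 / p₂ x ≤ I)
    (hp : ∀ x, p x = ∫ y, p₁ (x - y) * p₂ y)
    (hp'' : ∀ x, p'' x = ∫ y, p₁' y * p₂' (x - y)) :
    (∫⁻ x in {x | 0 < p x}, ENNReal.ofReal ((p'' x) ^ 2 / p x))
      ≤ ENNReal.ofReal (I ^ 2) := by
  have hI : 0 ≤ I :=
    (integral_nonneg fun x => div_nonneg (sq_nonneg _) (h₁nonneg x)).trans h₁I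
  have hm₁ : Measurable p₁ :=
    (Differentiable.continuous fun x => (h₁deriv x).differentiableAt).measurable
  have hm₂ : Measurable p₂ :=
    (Differentiable.continuous fun x => (h₂deriv x).differentiableAt).measurable
  have hm₁' : Measurable p₁' := measurable_of_hasDerivAt h₁deriv
  have hm₂' : Measurable p₂' := measurable_of_hasDerivAt h₂deriv
  have hp_comm (x : ℝ) : p x = ∫ y, p₁ y * p₂ (x - y) := by
    rw [hp x, ← integral_sub_left_eq_self _ volume x]
    simp_rw [sub_sub_cancel]
  calc (∫⁻ x in {x | 0 < p x}, ENNReal.ofReal ((p'' x) ^ 2 / p x))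
      ≤ ∫⁻ x, (fisherDensity p₁ p₁' ⋆ₗ fisherDensity p₂ p₂') x := by
        refine (setLIntegral_le_lintegral _ _).trans (lintegral_mono fun x => ?_)
        rw [hp'' x, hp_comm x]
        exact ofReal_sq_div_le_lconvolution_fisherDensity hm₁ hm₁' hm₂ hm₂'
          h₁nonneg h₂nonneg
          (fun y hy => (h₁deriv y).eq_zero_of_nonneg_of_eq_zero h₁nonneg hy)
          (fun y hy => (h₂deriv y).eq_zero_of_nonneg_of_eq_zero h₂nonneg hy) x
    _ = (∫⁻ x, fisherDensity p₁ p₁' x) * ∫⁻ x, fisherDensity p₂ p₂' x :=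
        lintegral_lconvolution (by fun_prop) (by fun_prop)
    _ ≤ ENNReal.ofReal I * ENNReal.ofReal I := by
        rw [lintegral_fisherDensity h₁nonneg h₁fisher,
          lintegral_fisherDensity h₂nonneg h₂fisher]
        gcongr
    _ = ENNReal.ofReal (I ^ 2) := by rw [← ENNReal.ofReal_mul hI, sq]

/-- Let `p = p₁ * p₂` be the convolution of two absolutely
continuous probability densities, each with Fisher information at most `I`, with
integrable derivatives.  Then the second derivative `p'' = p₁' * p₂'` satisfies
`∫_{p>0} p''(x)²/p(x) dx ≤ I²`. -/
theorem second_deriv_bound_conv_two_densities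
    (p₁ p₁' p₂ p₂' p p'' : ℝ → ℝ) (I : ℝ)
    (h₁nonneg : ∀ x, 0 ≤ p₁ x) (h₁int : Integrable p₁) (h₁mass : ∫ x, p₁ x = 1)
    (h₂nonneg : ∀ x, 0 ≤ p₂ x) (h₂int : Integrable p₂) (h₂mass : ∫ x, p₂ x = 1)
    (h₁deriv : ∀ x, HasDerivAt p₁ (p₁' x) x)
    (h₂deriv : ∀ x, HasDerivAt p₂ (p₂' x) x)
    (h₁'int : Integrable p₁') (h₂'int : Integrable p₂')
    (h₁fisher : IntegrableOn (fun x => (p₁' x) ^ 2 / p₁ x) {x | 0 < p₁ x})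
    (h₂fisher : IntegrableOn (fun x => (p₂' x) ^ 2 / p₂ x) {x | 0 < p₂ x})
    (h₁I : ∫ x in {x | 0 < p₁ x}, (p₁' x) ^ 2 / p₁ x ≤ I)
    (h₂I : ∫ x in {x | 0 < p₂ x}, (p₂' x) ^ 2 / p₂ x ≤ I)
    (hp : ∀ x, p x = ∫ y, p₁ (x - y) * p₂ y)
    (hp'' : ∀ x, p'' x = ∫ y, p₁' y * p₂' (x - y)) :
    (∫⁻ x in {x | 0 < p x}, ENNReal.ofReal ((p'' x) ^ 2 / p x))
      ≤ ENNReal.ofReal (I ^ 2) :=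
  second_deriv_bound_conv_two_densities_general p₁ p₁' p₂ p₂' p p'' I h₁nonneg h₂nonneg h₁deriv
    h₂deriv h₁fisher h₂fisher h₁I h₂I hp hp''
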